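/- arXiv:2302.13529 — 2 statements merged into one kernel-verified Lean document; each statement's English description precedes it below -/
import Mathlib

section
/- If a vertex u has no outgoing edges, then for any seed s ≠ u and any blocker set B not containing u, the decrease in expected spread from additionally blocking u equals exactly the activation probability of u: E(s, G[V\B]) − E(s, G[V\(B∪{u})]) = P^{G[V\B]}(u, s). -/
/-!
Independent cascade model via random sampled (live-edge) graphs.
-/

open Finset

noncomputable section
open scoped Classical

variable {V : Type*}

/-- Probability weight of a sampled graph `ω`. -/
def sampleWeight [Fintype V] (p : V → V → ℝ) (ω : V → V → Bool) : ℝ :=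
  ∏ u : V, ∏ v : V, if ω u v then p u v else 1 - p u v

/-- Reachability from `s` to `w` in the sampled graph `ω`, through vertices
outside the blocker set `B`. -/
def ReachB (ω : V → V → Bool) (B : Finset V) (s w : V) : Prop :=
  Relation.ReflTransGen (fun a b => ω a b = true ∧ a ∉ B ∧ b ∉ B) s w

/-- Number of vertices reachable from the seed set `S` in the sampled graph `ω`
restricted to `V \ B`. -/
def sigmaB [Fintype V] (ω : V → V → Bool) (B S : Finset V) : ℕ :=
  (Finset.univ.filter fun w => ∃ s ∈ S, ReachB ω B s w).card

/-- Expected spread of seed set `S` when the blocker set `B` is removed. -/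
def spread [Fintype V] (p : V → V → ℝ) (S B : Finset V) : ℝ :=
  ∑ ω : V → V → Bool, sampleWeight p ω * (sigmaB ω B S : ℝ)

/-- `actProb p s B u` = `P^{G[V\B]}(u, s)`: the probability that `u` is
activated by the seed `s` in the graph with blocker set `B` removed. -/
def actProb [Fintype V] (p : V → V → ℝ) (s : V) (B : Finset V) (u : V) : ℝ :=
  ∑ ω : V → V → Bool, sampleWeight p ω * (if ReachB ω B s u then 1 else 0)

/-!
Both sides are averages over live-edge samples, so compare them sample by sample. A sample
containing an edge out of `u` has weight zero, since that edge has probability `0`. In every other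
sample `u` is a dead end, so blocking it cuts no path from `s` to another vertex, and the reachable
set loses exactly `u`, when `u` was reachable.
-/

theorem sampleWeight_eq_zero_of_edge [Fintype V] {p : V → V → ℝ} {ω : V → V → Bool} {u v : V}
    (huv : ω u v = true) (hp : p u v = 0) : sampleWeight p ω = 0 :=
  prod_eq_zero (mem_univ u) (prod_eq_zero (mem_univ v) (by simp [huv, hp]))

theorem ReachB.mono_blockers {ω : V → V → Bool} {B C : Finset V} (hBC : B ⊆ C) {s w : V}
    (h : ReachB ω C s w) : ReachB ω B s w :=
  Relation.ReflTransGen.mono (fun _ _ hab => ⟨hab.1, fun ha => hab.2.1 (hBC ha),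
    fun hb => hab.2.2 (hBC hb)⟩) _ _ h

theorem reachB_union_sink_iff {ω : V → V → Bool} {B : Finset V} {s u w : V}
    (hsink : ∀ v, ω u v = false) (hsu : s ≠ u) :
    ReachB ω (B ∪ {u}) s w ↔ ReachB ω B s w ∧ w ≠ u := by
  constructor
  · intro h
    refine ⟨h.mono_blockers subset_union_left, ?_⟩
    cases h with
    | refl => exact hsu
    | tail _ hlast => rintro rfl; exact hlast.2.2 (by simp)
  · rintro ⟨h, hwu⟩
    induction h with
    | refl => exact Relation.ReflTransGen.refl
    | @tail b c _ hbc ih =>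
      -- `b` has an outgoing edge in `ω`, so it is not the sink `u`
      have hbu : b ≠ u := by rintro rfl; simp [hsink] at hbc
      exact (ih hbu).tail ⟨hbc.1, by simp [hbc.2.1, hbu], by simp [hbc.2.2, hwu]⟩

theorem sigmaB_singleton [Fintype V] (ω : V → V → Bool) (B : Finset V) (s : V) :
    sigmaB ω B {s} = #(univ.filter fun w => ReachB ω B s w) := by
  simp [sigmaB]

theorem sigmaB_eq_sigmaB_union_sink_add [Fintype V] {ω : V → V → Bool} {B : Finset V}
    {s u : V} (hsink : ∀ v, ω u v = false) (hsu : s ≠ u) :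
    (sigmaB ω B {s} : ℝ) = sigmaB ω (B ∪ {u}) {s} + if ReachB ω B s u then 1 else 0 := by
  have hreach : (univ.filter fun w => ReachB ω (B ∪ {u}) s w) =
      (univ.filter fun w => ReachB ω B s w).erase u := by
    ext w
    simp only [mem_filter, mem_erase, mem_univ, true_and]
    rw [reachB_union_sink_iff hsink hsu, and_comm]
  rw [sigmaB_singleton, sigmaB_singleton, hreach]
  split_ifs with hu
  · rw [← card_erase_add_one (by simpa using hu)]
    push_cast
    rfl
  · rw [erase_eq_of_notMem (by simpa using hu), add_zero]

theorem spread_decrease_sink_eq_actProb_general [Fintype V] (p : V → V → ℝ)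
    (s u : V) (B : Finset V) (hsink : ∀ v, p u v = 0)
    (hsu : s ≠ u) :
    spread p {s} B - spread p {s} (B ∪ {u}) = actProb p s B u := by
  unfold spread actProb
  rw [← sum_sub_distrib]
  refine sum_congr rfl fun ω _ => ?_
  by_cases hedge : ∃ v, ω u v = true
  · obtain ⟨v, hv⟩ := hedge
    simp [sampleWeight_eq_zero_of_edge hv (hsink v)]
  · push Not at hedge
    rw [sigmaB_eq_sigmaB_union_sink_add (by simpa using hedge) hsu]
    ring

/-- if a vertex `u` has no outgoing edges, then for any seed
`s ≠ u` and any blocker set `B` (not containing `u` or `s`), the decrease in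
expected spread from additionally blocking `u` equals exactly the activation
probability of `u`:
`E(s, G[V\B]) - E(s, G[V\(B ∪ {u})]) = P^{G[V\B]}(u, s)`. -/
theorem spread_decrease_sink_eq_actProb [Fintype V] (p : V → V → ℝ)
    (hp : ∀ u v, 0 ≤ p u v ∧ p u v ≤ 1)
    (s u : V) (B : Finset V) (hsink : ∀ v, p u v = 0)
    (hsu : s ≠ u) (huB : u ∉ B) (hsB : s ∉ B) :
    spread p {s} B - spread p {s} (B ∪ {u}) = actProb p s B u :=
  spread_decrease_sink_eq_actProb_general p s u B hsink hsu

end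
end

section
/- Given a directed graph g with source s and a vertex u ≠ s, the set R_u = {w : w reachable from s, and every s-to-w path passes through u} satisfies: R_u is exactly the set of vertices dominated by u that are reachable from s; moreover σ(s, g) − |R_u| equals the number of vertices reachable from s in g with u removed. -/
/-!
Dominators in a directed graph `g : V → V → Prop` with a source vertex `s`.
-/

open Finset

noncomputable section
open scoped Classical

variable {V : Type*}

/-- `w` is reachable from `s` in the directed graph `g`. -/
def Reach (g : V → V → Prop) (s w : V) : Prop :=
  Relation.ReflTransGen g s w

/-- `w` is reachable from `s` in `g` by a path avoiding the vertex `u`. -/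
def ReachAvoid (g : V → V → Prop) (u s w : V) : Prop :=
  Relation.ReflTransGen (fun a b => g a b ∧ a ≠ u ∧ b ≠ u) s w

/-- `u` dominates `v` (w.r.t. source `s`): `v` is reachable from `s` and every
path from `s` to `v` passes through `u`. -/
def Dominates (g : V → V → Prop) (s u v : V) : Prop :=
  Reach g s v ∧ (u = v ∨ ¬ ReachAvoid g u s v)

/-- `u` is the immediate dominator of `v`: `u` is a dominator of `v` other than
`v`, and every other dominator of `v` dominates `u`. -/
def IsIdom (g : V → V → Prop) (s u v : V) : Prop :=
  Dominates g s u v ∧ u ≠ v ∧ ∀ w, Dominates g s w v → w ≠ v → Dominates g s w u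

/-- `v` lies in the subtree rooted at `u` of the dominator tree of `g` with
source `s` (i.e. `u` is an ancestor of `v`, or `v` itself, along immediate
dominator edges). -/
def InDomSubtree (g : V → V → Prop) (s u v : V) : Prop :=
  Relation.ReflTransGen (fun a b => IsIdom g s a b) u v

lemma ReachAvoid.reach {g : V → V → Prop} {u s w : V} (h : ReachAvoid g u s w) : Reach g s w :=
  Relation.ReflTransGen.mono (fun _ _ hab => hab.1) _ _ h

lemma not_reachAvoid_self {g : V → V → Prop} {s u : V} (hsu : s ≠ u) : ¬ ReachAvoid g u s u := by
  intro h
  rcases h.cases_tail with h | ⟨_, _, _, _, hu⟩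
  exacts [hsu h.symm, hu rfl]

/-- Away from the source, the disjunct `u = v` in `Dominates` is subsumed by the second one. -/
lemma dominates_iff_reach_and_not_reachAvoid {g : V → V → Prop} {s u w : V} (hsu : s ≠ u) :
    Dominates g s u w ↔ Reach g s w ∧ ¬ ReachAvoid g u s w := by
  refine ⟨fun ⟨hr, hw⟩ => ⟨hr, ?_⟩, fun ⟨hr, hw⟩ => ⟨hr, Or.inr hw⟩⟩
  rcases hw with rfl | hw
  exacts [not_reachAvoid_self hsu, hw]

lemma Finset.card_filter_sub_card_filter_and_not {α : Type*} (t : Finset α) {p q : α → Prop}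
    [DecidablePred p] [DecidablePred q] (hpq : ∀ a ∈ t, p a → q a) :
    #{a ∈ t | q a} - #{a ∈ t | q a ∧ ¬ p a} = #{a ∈ t | p a} := by
  have hsplit := Finset.card_filter_add_card_filter_not (s := {a ∈ t | q a}) p
  rw [Finset.filter_filter, Finset.filter_filter] at hsplit
  have hp : #{a ∈ t | q a ∧ p a} = #{a ∈ t | p a} := congrArg card <|
    Finset.filter_congr fun a ha => ⟨And.right, fun hpa => ⟨hpq a ha hpa, hpa⟩⟩
  omega

/-- for `u ≠ s`, the set
`R_u = {w | w reachable from s and every s-to-w path passes through u}` is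
exactly the set of reachable vertices dominated by `u`; moreover
`σ(s,g) - |R_u|` equals the number of vertices reachable from `s` in `g` with
`u` removed. -/
theorem through_set_eq_dominated_and_count [Fintype V] (g : V → V → Prop)
    (s u : V) (hsu : s ≠ u) :
    (Finset.univ.filter fun w => Reach g s w ∧ ¬ ReachAvoid g u s w) =
      (Finset.univ.filter fun w => Dominates g s u w) ∧
    (Finset.univ.filter fun w => Reach g s w).card -
        (Finset.univ.filter fun w => Reach g s w ∧ ¬ ReachAvoid g u s w).card =
      (Finset.univ.filter fun w => ReachAvoid g u s w).card :=
  ⟨Finset.filter_congr fun _ _ => (dominates_iff_reach_and_not_reachAvoid hsu).symm,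
    Finset.card_filter_sub_card_filter_and_not _ fun _ _ => ReachAvoid.reach⟩
end
end
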